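/- Let v : ℝ^d → ℝ^d be a bounded Lipschitz vector field with Lipschitz constant L, and let μ, ν ∈ M_0^{ac}. Then for every t ≥ 0, W^{a,b}_p(Φ^v_t#μ, Φ^v_t#ν) ≤ e^{((p+1)/p)·L·t} · W^{a,b}_p(μ, ν). -/

import Mathlib

/-!
The flow map `Φ t` is `e^{Lt}`-Lipschitz by Grönwall's inequality. Pushing forward along a
measurable map does not increase the total variation distance, while pushing forward along a
`K`-Lipschitz map preserves finite `p`-th moments and equal masses and multiplies `W_p` by at
most `K`, since plans can be pushed forward as well. So every admissible pair `(μ̃, ν̃)` for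
`W^{a,b}_p(μ, ν)` is carried to an admissible pair for the pushed measures whose cost is at most
`e^{Lt}` times larger, and `e^{Lt} ≤ e^{(p+1)Lt/p}` because `L ≥ 0` once `d ≥ 1`.
-/

open MeasureTheory ENNReal Filter Topology

noncomputable section

/-- `ℝ^d` as a Euclidean space. -/
abbrev Euc (d : ℕ) := EuclideanSpace ℝ (Fin d)

variable {E : Type*} [NormedAddCommGroup E] [MeasurableSpace E]

/-- Total mass `|μ| = μ(ℝ^d)` of a nonnegative measure, as a real number. -/
def mass (μ : Measure E) : ℝ := (μ Set.univ).toReal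

/-- Total variation norm `|μ - ν|` of the difference of two nonnegative finite
measures, computed via the Jordan decomposition `(μ - ν) + (ν - μ)`. -/
def tvDist (μ ν : Measure E) : ℝ := ((μ - ν) Set.univ + (ν - μ) Set.univ).toReal

/-- `μ` has finite `p`-th moment. -/
def FinMom (p : ℝ) (μ : Measure E) : Prop :=
  ∫⁻ x, ENNReal.ofReal (‖x‖ ^ p) ∂μ < ⊤

/-- `π` is a transference plan from `μ` to `ν`: its first and second marginals
are `μ` and `ν` respectively. -/
def IsPlan (π : Measure (E × E)) (μ ν : Measure E) : Prop :=
  π.map Prod.fst = μ ∧ π.map Prod.snd = ν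

/-- Transportation cost `∫ |x - y|^p dπ(x,y)` of a plan `π`. -/
def Wcost (p : ℝ) (π : Measure (E × E)) : ℝ≥0∞ :=
  ∫⁻ z, ENNReal.ofReal (dist z.1 z.2 ^ p) ∂π

/-- The Wasserstein distance `W_p(μ,ν) = (inf_π ∫ |x-y|^p dπ)^{1/p}`. -/
def Wp (p : ℝ) (μ ν : Measure E) : ℝ :=
  ((sInf (Wcost p '' {π | IsPlan π μ ν})) ^ (1 / p)).toReal

/-- The set of admissible values `a|μ-μ̃| + a|ν-ν̃| + b W_p(μ̃,ν̃)` over all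
`μ̃, ν̃ ∈ M^p` with `|μ̃| = |ν̃|`. -/
def gwSet (a b p : ℝ) (μ ν : Measure E) : Set ℝ :=
  { r | ∃ μ' ν' : Measure E, IsFiniteMeasure μ' ∧ IsFiniteMeasure ν' ∧
      FinMom p μ' ∧ FinMom p ν' ∧ μ' Set.univ = ν' Set.univ ∧
      r = a * tvDist μ μ' + a * tvDist ν ν' + b * Wp p μ' ν' }

/-- The generalized Wasserstein distance `W^{a,b}_p`. -/
def GW (a b p : ℝ) (μ ν : Measure E) : ℝ := sInf (gwSet a b p μ ν)

/-- The support of a measure: the set of points all of whose open neighbourhoods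
have positive measure. -/
def msupp (μ : Measure E) : Set E := {x : E | ∀ U : Set E, IsOpen U → x ∈ U → μ U ≠ 0}

/-- Weak convergence of a sequence of measures: convergence of integrals of all
bounded continuous functions. -/
def WeakConv {F : Type*} [MeasurableSpace F] [TopologicalSpace F]
    (μs : ℕ → Measure F) (μ : Measure F) : Prop :=
  ∀ f : F → ℝ, Continuous f → (∃ C : ℝ, ∀ x, |f x| ≤ C) →
    Tendsto (fun n => ∫ x, f x ∂(μs n)) atTop (𝓝 (∫ x, f x ∂μ))

/-- A family of measures is tight if for every `ε > 0` there is a compact set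
whose complement has measure less than `ε` for all members of the family. -/
def Tight (F : Set (Measure E)) : Prop :=
  ∀ ε : ℝ, 0 < ε → ∃ K : Set E, IsCompact K ∧ ∀ μ ∈ F, μ Kᶜ < ENNReal.ofReal ε

end

noncomputable section

/-- `μ ∈ M_0^{ac}`: a finite measure, absolutely continuous with respect to the
Lebesgue measure, with bounded support. -/
def M0ac {d : ℕ} (μ : MeasureTheory.Measure (Euc d)) : Prop :=
  MeasureTheory.IsFiniteMeasure μ ∧ μ ≪ MeasureTheory.volume ∧ Bornology.IsBounded (msupp μ)

/-- `Φ` is the flow of the vector field `v`: `Φ 0 = id` and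
`∂_t Φ_t(x) = v(Φ_t(x))`. -/
def IsFlow {d : ℕ} (v : Euc d → Euc d) (Φ : ℝ → Euc d → Euc d) : Prop :=
  (∀ x, Φ 0 x = x) ∧ ∀ x t, HasDerivAt (fun s => Φ s x) (v (Φ t x)) t

end

namespace MeasureTheory.Measure

variable {α β : Type*} [MeasurableSpace α] [MeasurableSpace β]

theorem le_sub_add (μ ν : Measure α) [IsFiniteMeasure μ] [IsFiniteMeasure ν] :
    μ ≤ μ - ν + ν := by
  obtain ⟨s, hs⟩ := exists_isHahnDecomposition μ ν
  have h_compl : (μ - ν + ν).restrict sᶜ = μ.restrict sᶜ := by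
    rw [restrict_add, restrict_sub_eq_restrict_sub_restrict hs.measurableSet.compl,
      sub_add_cancel_of_le hs.ge_on_compl]
  calc μ = μ.restrict s + μ.restrict sᶜ := (restrict_add_restrict_compl hs.measurableSet).symm
    _ ≤ (μ - ν + ν).restrict s + (μ - ν + ν).restrict sᶜ := by
      rw [h_compl]
      exact add_le_add_left (hs.le_on.trans (restrict_mono le_rfl (Measure.le_add_left le_rfl))) _
    _ = μ - ν + ν := restrict_add_restrict_compl hs.measurableSet

theorem map_sub_map_le {f : α → β} (hf : Measurable f) (μ ν : Measure α)
    [IsFiniteMeasure μ] [IsFiniteMeasure ν] : μ.map f - ν.map f ≤ (μ - ν).map f :=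
  sub_le_of_le_add <| (map_mono (le_sub_add μ ν) hf).trans_eq (Measure.map_add _ _ hf)

end MeasureTheory.Measure

section TotalVariation

variable {α : Type*} [MeasurableSpace α]

theorem tvDist_nonneg (μ ν : Measure α) : 0 ≤ tvDist μ ν := ENNReal.toReal_nonneg

theorem tvDist_map_le {f : α → α} (hf : Measurable f) (μ ν : Measure α)
    [IsFiniteMeasure μ] [IsFiniteMeasure ν] : tvDist (μ.map f) (ν.map f) ≤ tvDist μ ν := by
  have h_univ : ∀ (μ ν : Measure α) [IsFiniteMeasure μ] [IsFiniteMeasure ν],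
      (μ.map f - ν.map f) Set.univ ≤ (μ - ν) Set.univ := fun μ ν _ _ => by
    simpa [Measure.map_apply hf MeasurableSet.univ] using Measure.map_sub_map_le hf μ ν Set.univ
  refine ENNReal.toReal_mono ?_ (add_le_add (h_univ μ ν) (h_univ ν μ))
  exact ENNReal.add_ne_top.2 ⟨measure_ne_top _ _, measure_ne_top _ _⟩

end TotalVariation

open scoped NNReal

section Plans

variable {α : Type*} [MeasurableSpace α]

theorem IsPlan.map {π : Measure (α × α)} {μ ν : Measure α} (hπ : IsPlan π μ ν) {f : α → α}
    (hf : Measurable f) : IsPlan (π.map (Prod.map f f)) (μ.map f) (ν.map f) := by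
  constructor
  · rw [Measure.map_map measurable_fst (hf.prodMap hf), ← hπ.1,
      Measure.map_map hf measurable_fst]
    rfl
  · rw [Measure.map_map measurable_snd (hf.prodMap hf), ← hπ.2,
      Measure.map_map hf measurable_snd]
    rfl

theorem exists_isPlan (μ ν : Measure α) [IsFiniteMeasure μ] [IsFiniteMeasure ν]
    (hmass : μ Set.univ = ν Set.univ) : ∃ π, IsPlan π μ ν := by
  by_cases hμ : μ = 0
  · have hν : ν = 0 := by
      rw [← Measure.measure_univ_eq_zero, ← hmass, hμ, Measure.coe_zero, Pi.zero_apply]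
    exact ⟨0, by simp [IsPlan, hμ, hν]⟩
  have h_ne : μ Set.univ ≠ 0 := by simpa using hμ
  refine ⟨(μ Set.univ)⁻¹ • μ.prod ν, ?_, ?_⟩
  · rw [Measure.map_smul, Measure.map_fst_prod, ← hmass, smul_smul,
      ENNReal.inv_mul_cancel h_ne (measure_ne_top μ _), one_smul]
  · rw [Measure.map_smul, Measure.map_snd_prod, smul_smul,
      ENNReal.inv_mul_cancel h_ne (measure_ne_top μ _), one_smul]

end Plans

section Transport

variable {E : Type*} [NormedAddCommGroup E] [MeasurableSpace E] {p : ℝ}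

theorem finMom_iff_lintegral_enorm (hp : 0 ≤ p) (μ : Measure E) :
    FinMom p μ ↔ ∫⁻ x, ‖x‖ₑ ^ p ∂μ < ∞ := by
  simp only [FinMom, ← ofReal_norm, ENNReal.ofReal_rpow_of_nonneg (norm_nonneg _) hp]

theorem Wcost_eq_lintegral_edist (hp : 0 ≤ p) (π : Measure (E × E)) :
    Wcost p π = ∫⁻ z, edist z.1 z.2 ^ p ∂π := by
  simp only [Wcost, edist_dist, ENNReal.ofReal_rpow_of_nonneg dist_nonneg hp]

theorem FinMom.map_of_lipschitzWith (hp : 0 ≤ p) {K : ℝ≥0} {f : E → E} (hf : LipschitzWith K f)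
    {μ : Measure E} [IsFiniteMeasure μ] (hμ : FinMom p μ) : FinMom p (μ.map f) := by
  rw [finMom_iff_lintegral_enorm hp] at hμ ⊢
  set C := (ENNReal.ofReal p)⁻¹.LpAddConst
  have h_pt : ∀ x, ‖f x‖ₑ ^ p ≤ C * (‖f 0‖ₑ ^ p + (K : ℝ≥0∞) ^ p * ‖x‖ₑ ^ p) := fun x => by
    have h : ‖f x‖ₑ ≤ ‖f 0‖ₑ + K * ‖x‖ₑ := by
      simpa [edist_zero_right, add_comm] using
        (edist_triangle (f x) (f 0) 0).trans (add_le_add (hf.edist_le_mul x 0) le_rfl)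
    calc ‖f x‖ₑ ^ p ≤ (‖f 0‖ₑ + K * ‖x‖ₑ) ^ p := ENNReal.rpow_le_rpow h hp
      _ ≤ _ := by
        rw [← ENNReal.mul_rpow_of_nonneg _ _ hp]
        exact ENNReal.rpow_add_le_mul_rpow_add_rpow' _ _ hp
  have h_top : ∀ x : ℝ≥0∞, x ≠ ∞ → x ^ p < ∞ := fun x hx => ENNReal.rpow_lt_top_of_nonneg hp hx
  calc ∫⁻ x, ‖x‖ₑ ^ p ∂μ.map f ≤ ∫⁻ x, ‖f x‖ₑ ^ p ∂μ := lintegral_map_le _ _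
    _ ≤ ∫⁻ x, C * (‖f 0‖ₑ ^ p + (K : ℝ≥0∞) ^ p * ‖x‖ₑ ^ p) ∂μ := lintegral_mono h_pt
    _ = C * (‖f 0‖ₑ ^ p * μ Set.univ + (K : ℝ≥0∞) ^ p * ∫⁻ x, ‖x‖ₑ ^ p ∂μ) := by
      rw [lintegral_const_mul' _ _ (LpAddConst_lt_top _).ne, lintegral_add_left measurable_const,
        lintegral_const, lintegral_const_mul' _ _ (h_top _ ENNReal.coe_ne_top).ne]
    _ < ∞ := ENNReal.mul_lt_top (LpAddConst_lt_top _) <| ENNReal.add_lt_top.2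
      ⟨ENNReal.mul_lt_top (h_top _ enorm_ne_top) (measure_lt_top μ _),
        ENNReal.mul_lt_top (h_top _ ENNReal.coe_ne_top) hμ⟩

theorem Wcost_map_le (hp : 0 ≤ p) {K : ℝ≥0} {f : E → E} (hf : LipschitzWith K f)
    (π : Measure (E × E)) : Wcost p (π.map (Prod.map f f)) ≤ (K : ℝ≥0∞) ^ p * Wcost p π := by
  rw [Wcost_eq_lintegral_edist hp, Wcost_eq_lintegral_edist hp,
    ← lintegral_const_mul' _ _ (ENNReal.rpow_ne_top_of_nonneg hp ENNReal.coe_ne_top)]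
  refine (lintegral_map_le _ _).trans (lintegral_mono fun z => ?_)
  rw [← ENNReal.mul_rpow_of_nonneg _ _ hp]
  exact ENNReal.rpow_le_rpow (hf.edist_le_mul z.1 z.2) hp

theorem IsPlan.Wcost_lt_top [OpensMeasurableSpace E] (hp : 0 ≤ p) {π : Measure (E × E)}
    {μ ν : Measure E} (hπ : IsPlan π μ ν) (hμ : FinMom p μ) (hν : FinMom p ν) :
    Wcost p π < ∞ := by
  rw [finMom_iff_lintegral_enorm hp] at hμ hν
  have h_meas : Measurable fun x : E => ‖x‖ₑ ^ p := measurable_enorm.pow_const p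
  have h_fst : ∫⁻ z, ‖z.1‖ₑ ^ p ∂π = ∫⁻ x, ‖x‖ₑ ^ p ∂μ := by
    rw [← hπ.1, lintegral_map h_meas measurable_fst]
  have h_snd : ∫⁻ z, ‖z.2‖ₑ ^ p ∂π = ∫⁻ x, ‖x‖ₑ ^ p ∂ν := by
    rw [← hπ.2, lintegral_map h_meas measurable_snd]
  set C := (ENNReal.ofReal p)⁻¹.LpAddConst
  have h_pt : ∀ z : E × E, edist z.1 z.2 ^ p ≤ C * (‖z.1‖ₑ ^ p + ‖z.2‖ₑ ^ p) := fun z =>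
    (ENNReal.rpow_le_rpow (by simpa [edist_eq_enorm_sub] using enorm_sub_le) hp).trans
      (ENNReal.rpow_add_le_mul_rpow_add_rpow' _ _ hp)
  rw [Wcost_eq_lintegral_edist hp]
  calc ∫⁻ z, edist z.1 z.2 ^ p ∂π ≤ ∫⁻ z, C * (‖z.1‖ₑ ^ p + ‖z.2‖ₑ ^ p) ∂π := lintegral_mono h_pt
    _ = C * (∫⁻ x, ‖x‖ₑ ^ p ∂μ + ∫⁻ x, ‖x‖ₑ ^ p ∂ν) := by
      rw [lintegral_const_mul' _ _ (LpAddConst_lt_top _).ne,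
        lintegral_add_left (f := fun z : E × E => ‖z.1‖ₑ ^ p) (h_meas.comp measurable_fst),
        h_fst, h_snd]
    _ < ∞ := ENNReal.mul_lt_top (LpAddConst_lt_top _) (ENNReal.add_lt_top.2 ⟨hμ, hν⟩)

end Transport

section Wasserstein

variable {E : Type*} [NormedAddCommGroup E] [MeasurableSpace E] [BorelSpace E] {p : ℝ}
  {K : ℝ≥0} {f : E → E}

theorem sInf_Wcost_map_le (hp : 0 ≤ p) (hf : LipschitzWith K f) {μ ν : Measure E}
    (h_plan : ∃ π, IsPlan π μ ν) :
    sInf (Wcost p '' {π | IsPlan π (μ.map f) (ν.map f)}) ≤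
      (K : ℝ≥0∞) ^ p * sInf (Wcost p '' {π | IsPlan π μ ν}) := by
  rw [sInf_image', sInf_image', ENNReal.mul_iInf'
    (fun h => absurd h (ENNReal.rpow_ne_top_of_nonneg hp ENNReal.coe_ne_top))
    (fun _ => h_plan.elim fun π hπ => ⟨⟨π, hπ⟩⟩)]
  exact le_iInf fun π =>
    (iInf_le _ ⟨_, π.2.map hf.continuous.measurable⟩).trans (Wcost_map_le hp hf _)

theorem Wp_map_le (hp : 0 < p) (hf : LipschitzWith K f) {μ ν : Measure E}
    [IsFiniteMeasure μ] [IsFiniteMeasure ν] (hμ : FinMom p μ) (hν : FinMom p ν)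
    (hmass : μ Set.univ = ν Set.univ) : Wp p (μ.map f) (ν.map f) ≤ K * Wp p μ ν := by
  obtain ⟨π, hπ⟩ := exists_isPlan μ ν hmass
  set B := sInf (Wcost p '' {π | IsPlan π μ ν})
  have hB : B ≠ ∞ :=
    ne_top_of_le_ne_top (hπ.Wcost_lt_top hp.le hμ hν).ne (sInf_le ⟨π, hπ, rfl⟩)
  have hKB : ((K : ℝ≥0∞) ^ p * B) ^ (1 / p) = K * B ^ (1 / p) := by
    rw [ENNReal.mul_rpow_of_nonneg _ _ (by positivity), ← ENNReal.rpow_mul,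
      mul_one_div_cancel hp.ne', ENNReal.rpow_one]
  calc Wp p (μ.map f) (ν.map f) ≤ (((K : ℝ≥0∞) ^ p * B) ^ (1 / p)).toReal :=
        ENNReal.toReal_mono (by rw [hKB]; finiteness)
          (ENNReal.rpow_le_rpow (sInf_Wcost_map_le hp.le hf ⟨π, hπ⟩) (by positivity))
    _ = K * Wp p μ ν := by rw [hKB, ENNReal.toReal_mul, ENNReal.coe_toReal]; rfl

end Wasserstein

section Generalized

variable {E : Type*} [NormedAddCommGroup E] [MeasurableSpace E] {a b p : ℝ}

theorem Wp_nonneg (μ ν : Measure E) : 0 ≤ Wp p μ ν := ENNReal.toReal_nonneg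

theorem nonneg_of_mem_gwSet (ha : 0 ≤ a) (hb : 0 ≤ b) {μ ν : Measure E} {r : ℝ}
    (hr : r ∈ gwSet a b p μ ν) : 0 ≤ r := by
  obtain ⟨μ', ν', -, -, -, -, -, rfl⟩ := hr
  have := tvDist_nonneg μ μ'
  have := tvDist_nonneg ν ν'
  have := Wp_nonneg (p := p) μ' ν'
  positivity

theorem gwSet_nonempty (μ ν : Measure E) : (gwSet a b p μ ν).Nonempty :=
  ⟨_, 0, 0, inferInstance, inferInstance, by simp [FinMom], by simp [FinMom], rfl, rfl⟩

theorem GW_nonneg (ha : 0 ≤ a) (hb : 0 ≤ b) (μ ν : Measure E) : 0 ≤ GW a b p μ ν :=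
  Real.sInf_nonneg fun _ => nonneg_of_mem_gwSet ha hb

theorem GW_le_of_mem (ha : 0 ≤ a) (hb : 0 ≤ b) {μ ν : Measure E} {r : ℝ}
    (hr : r ∈ gwSet a b p μ ν) : GW a b p μ ν ≤ r :=
  csInf_le ⟨0, fun _ => nonneg_of_mem_gwSet ha hb⟩ hr

theorem GW_map_le [BorelSpace E] (ha : 0 ≤ a) (hb : 0 ≤ b) (hp : 0 < p) {K : ℝ≥0} {f : E → E}
    (hf : LipschitzWith K f) (hK : 1 ≤ K) (μ ν : Measure E) [IsFiniteMeasure μ]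
    [IsFiniteMeasure ν] : GW a b p (μ.map f) (ν.map f) ≤ K * GW a b p μ ν := by
  have hK₀ : (0 : ℝ) < K := zero_lt_one.trans_le hK
  have hK₁ : (1 : ℝ) ≤ K := hK
  have hf_meas : Measurable f := hf.continuous.measurable
  rw [← div_le_iff₀' hK₀]
  refine le_csInf (gwSet_nonempty μ ν) ?_
  rintro _ ⟨μ', ν', _, _, hμ', hν', hmass, rfl⟩
  rw [div_le_iff₀' hK₀]
  have h_mem : a * tvDist (μ.map f) (μ'.map f) + a * tvDist (ν.map f) (ν'.map f) +
      b * Wp p (μ'.map f) (ν'.map f) ∈ gwSet a b p (μ.map f) (ν.map f) :=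
    ⟨_, _, inferInstance, inferInstance, hμ'.map_of_lipschitzWith hp.le hf,
      hν'.map_of_lipschitzWith hp.le hf,
      by simp only [Measure.map_apply hf_meas MeasurableSet.univ, Set.preimage_univ, hmass], rfl⟩
  have := tvDist_nonneg μ μ'
  have := tvDist_nonneg ν ν'
  calc GW a b p (μ.map f) (ν.map f)
      ≤ a * tvDist (μ.map f) (μ'.map f) + a * tvDist (ν.map f) (ν'.map f) +
        b * Wp p (μ'.map f) (ν'.map f) := GW_le_of_mem ha hb h_mem
    _ ≤ a * tvDist μ μ' + a * tvDist ν ν' + b * (K * Wp p μ' ν') := by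
      gcongr
      · exact tvDist_map_le hf_meas μ μ'
      · exact tvDist_map_le hf_meas ν ν'
      · exact Wp_map_le hp hf hμ' hν' hmass
    _ ≤ K * (a * tvDist μ μ' + a * tvDist ν ν' + b * Wp p μ' ν') := by
      nlinarith [mul_nonneg ha ‹0 ≤ tvDist μ μ'›, mul_nonneg ha ‹0 ≤ tvDist ν ν'›]

end Generalized

theorem nonneg_of_forall_norm_sub_le_mul {E F : Type*} [NormedAddCommGroup E] [Nontrivial E]
    [SeminormedAddCommGroup F] {v : E → F} {L : ℝ} (hL : ∀ x y, ‖v x - v y‖ ≤ L * ‖x - y‖) :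
    0 ≤ L := by
  obtain ⟨x, y, hxy⟩ := exists_pair_ne E
  exact nonneg_of_mul_nonneg_left ((norm_nonneg _).trans (hL x y))
    (norm_pos_iff.2 (sub_ne_zero.2 hxy))

theorem IsFlow.lipschitzWith {d : ℕ} {v : Euc d → Euc d} {Φ : ℝ → Euc d → Euc d}
    (hΦ : IsFlow v Φ) {K : ℝ≥0} (hv : LipschitzWith K v) {t : ℝ} (ht : 0 ≤ t) :
    LipschitzWith (⟨Real.exp (K * t), (Real.exp_pos _).le⟩ : ℝ≥0) (Φ t) :=
  LipschitzWith.of_dist_le_mul fun x y => by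
    have h_traj : ∀ x, ContinuousOn (fun s => Φ s x) (Set.Icc 0 t) := fun x =>
      (continuous_iff_continuousAt.2 fun s => (hΦ.2 x s).continuousAt).continuousOn
    have := dist_le_of_trajectories_ODE (v := fun _ => v) (fun _ => hv) (h_traj x)
      (fun s _ => (hΦ.2 x s).hasDerivWithinAt) (h_traj y)
      (fun s _ => (hΦ.2 y s).hasDerivWithinAt) (by rw [hΦ.1, hΦ.1]) t ⟨ht, le_rfl⟩
    show dist (Φ t x) (Φ t y) ≤ Real.exp (K * t) * dist x y
    simpa [mul_comm] using this

theorem gw_flow_flow_general {d : ℕ} (hd : 1 ≤ d) (a b p : ℝ) (hp : 1 ≤ p) (ha : 0 < a) (hb : 0 < b)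
    (v : Euc d → Euc d) (L : ℝ) (hL : ∀ x y, ‖v x - v y‖ ≤ L * ‖x - y‖)
    (Φ : ℝ → Euc d → Euc d) (hΦ : IsFlow v Φ)
    (μ ν : Measure (Euc d)) (hμ : M0ac μ) (hν : M0ac ν) (t : ℝ) (ht : 0 ≤ t) :
    GW a b p (μ.map (Φ t)) (ν.map (Φ t)) ≤ Real.exp ((p + 1) / p * L * t) * GW a b p μ ν := by
  have : Nonempty (Fin d) := ⟨⟨0, hd⟩⟩
  have hL₀ : 0 ≤ L := nonneg_of_forall_norm_sub_le_mul hL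
  have hv : LipschitzWith (⟨L, hL₀⟩ : ℝ≥0) v :=
    LipschitzWith.of_dist_le_mul fun x y => by
      rw [dist_eq_norm, dist_eq_norm]
      exact hL x y
  have : IsFiniteMeasure μ := hμ.1
  have : IsFiniteMeasure ν := hν.1
  have hp₀ : 0 < p := by linarith
  have h_exp : L * t ≤ (p + 1) / p * L * t := by
    have : 1 ≤ (p + 1) / p := by rw [le_div_iff₀ hp₀]; linarith
    nlinarith [mul_nonneg hL₀ ht]
  calc GW a b p (μ.map (Φ t)) (ν.map (Φ t)) ≤ Real.exp (L * t) * GW a b p μ ν :=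
        GW_map_le ha.le hb.le hp₀ (hΦ.lipschitzWith hv ht)
          (Real.one_le_exp (mul_nonneg hL₀ ht)) μ ν
    _ ≤ Real.exp ((p + 1) / p * L * t) * GW a b p μ ν := by
      gcongr
      exact GW_nonneg ha.le hb.le μ ν

theorem gw_flow_flow {d : ℕ} (hd : 1 ≤ d) (a b p : ℝ) (hp : 1 ≤ p) (ha : 0 < a) (hb : 0 < b)
    (v : Euc d → Euc d) (L : ℝ) (hL : ∀ x y, ‖v x - v y‖ ≤ L * ‖x - y‖)
    (hbdd : ∃ C : ℝ, ∀ x, ‖v x‖ ≤ C)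
    (Φ : ℝ → Euc d → Euc d) (hΦ : IsFlow v Φ)
    (μ ν : Measure (Euc d)) (hμ : M0ac μ) (hν : M0ac ν) (t : ℝ) (ht : 0 ≤ t) :
    GW a b p (μ.map (Φ t)) (ν.map (Φ t)) ≤ Real.exp ((p + 1) / p * L * t) * GW a b p μ ν :=
  gw_flow_flow_general hd a b p hp ha hb v L hL Φ hΦ μ ν hμ hν t ht
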